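/- Let X, Y be separable Banach spaces with B(SS(X,Y)) Borel in B(L(X,Y)) (strong operator topology), and fix m ∈ ℕ. The map φ_m sending a pair (R, (x_n)) ∈ B(SS(X,Y)) × 𝔅_X to the tree T(R, m, (x_n)) = {(l_1,...,l_n) : ∀ rational tuples (a_i), ‖R ∑ a_i x_{l_i}‖ ≥ (1/m)‖∑ a_i x_{l_i}‖} is a Borel map into the Polish space Tr of trees on ℕ. -/

import Mathlib

open Ordinal Set

/-- A tree on ℕ: a set of finite sequences closed under taking prefixes. -/
def IsTreeOn (T : Set (List ℕ)) : Prop := ∀ s ∈ T, ∀ t : List ℕ, t <+: s → t ∈ T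

/-- A tree has an infinite branch. -/
def HasInfiniteBranch (T : Set (List ℕ)) : Prop :=
  ∃ f : ℕ → ℕ, ∀ n : ℕ, (List.ofFn (fun i : Fin n => f i)) ∈ T

/-- A well-founded tree: no infinite branch. -/
def WellFoundedTree (T : Set (List ℕ)) : Prop := ¬ HasInfiniteBranch T

/-- Tree derivative: keep the nodes with a proper end-extension in the tree. -/
def treeDeriv (T : Set (List ℕ)) : Set (List ℕ) :=
  {s ∈ T | ∃ t ∈ T, s <+: t ∧ s ≠ t}

/-- Transfinite iterates of the tree derivative. -/
noncomputable def treeDerivIter (T : Set (List ℕ)) (ξ : Ordinal) : Set (List ℕ) :=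
  Ordinal.limitRecOn ξ T (fun _ ih => treeDeriv ih)
    (fun o _ ih => ⋂ (o' : Ordinal) (h : o' < o), ih o' h)

/-- The order of a (well-founded) tree: least ξ with T^(ξ) = ∅. -/
noncomputable def treeOrder (T : Set (List ℕ)) : Ordinal :=
  sInf {ξ | treeDerivIter T ξ = ∅}

/-- A < B for finite subsets of ℕ: every element of A is below every element of B. -/
def FinsetLt (A B : Finset ℕ) : Prop := ∀ a ∈ A, ∀ b ∈ B, a < b

/-- The recursive description of a system of Schreier families `S ξ`, with
(for each limit ordinal) some fixed increasing cofinal sequence used. -/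
structure IsSchreierFamily (S : Ordinal → Set (Finset ℕ)) : Prop where
  zero : S 0 = {F | (∃ n : ℕ, F = {n}) ∨ F = ∅}
  succ : ∀ ζ : Ordinal, S (ζ + 1) =
    {F | F = ∅ ∨ ∃ (n : ℕ) (hn : 1 ≤ n) (G : Fin n → Finset ℕ),
      (∀ i, G i ∈ S ζ) ∧ (∀ i j : Fin n, i < j → FinsetLt (G i) (G j)) ∧
      (∀ a ∈ G ⟨0, hn⟩, n ≤ a) ∧ F = Finset.univ.biUnion G}
  limit : ∀ ξ : Ordinal, Order.IsSuccLimit ξ → ∃ f : ℕ → Ordinal, StrictMono f ∧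
    (∀ n, f n < ξ) ∧ (⨆ n, f n) = ξ ∧
    S ξ = ⋃ n : ℕ, {F ∈ S (f n) | ∀ a ∈ F, n ≤ a}

/-- The tree associated to a family of finite subsets of ℕ: finite subsets are
identified with the lists enumerating them in increasing order. -/
def schreierTree (A : Set (Finset ℕ)) : Set (List ℕ) :=
  {l | l.Pairwise (· < ·) ∧ l.toFinset ∈ A}

section Banach

variable {X Y : Type*} [NormedAddCommGroup X] [NormedSpace ℝ X]
  [NormedAddCommGroup Y] [NormedSpace ℝ Y]

/-- A strictly singular operator: bounded below on no infinite-dimensional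
closed subspace (equivalently, an isomorphism on no such subspace). -/
def StrictlySingular (T : X →L[ℝ] Y) : Prop :=
  ∀ Z : Submodule ℝ X, IsClosed (Z : Set X) → ¬ FiniteDimensional ℝ Z →
    ¬ ∃ c > 0, ∀ z ∈ Z, c * ‖z‖ ≤ ‖T z‖

/-- A basic sequence, via the basis-constant inequality. -/
def IsBasicSeq (x : ℕ → X) : Prop :=
  ∃ K : ℝ, ∀ (m n : ℕ), m ≤ n → ∀ a : ℕ → ℝ,
    ‖∑ i ∈ Finset.range m, a i • x i‖ ≤ K * ‖∑ i ∈ Finset.range n, a i • x i‖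

/-- A normalized basic sequence. -/
def NormalizedBasicSeq (x : ℕ → X) : Prop := (∀ n, ‖x n‖ = 1) ∧ IsBasicSeq x

/-- `𝒜`-strictly singular operators, for a family `𝒜` of finite subsets of ℕ. -/
def ASS (𝒜 : Set (Finset ℕ)) (T : X →L[ℝ] Y) : Prop :=
  ∀ ε > (0:ℝ), ∀ x : ℕ → X, NormalizedBasicSeq x →
    ∃ F ∈ 𝒜, ∃ v ∈ Submodule.span ℝ (x '' (F : Set ℕ)), v ≠ 0 ∧ ‖T v‖ < ε * ‖v‖

/-- `‖T|_Z‖ < ε`. -/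
def RestrictNormLt (T : X →L[ℝ] Y) (Z : Submodule ℝ X) (ε : ℝ) : Prop :=
  ∃ c, 0 ≤ c ∧ c < ε ∧ ∀ z ∈ Z, ‖T z‖ ≤ c * ‖z‖

/-- Hereditarily indecomposable space. -/
def HereditarilyIndecomposable (X : Type*) [NormedAddCommGroup X] [NormedSpace ℝ X] : Prop :=
  ∀ W Z : Submodule ℝ X, IsClosed (W : Set X) → IsClosed (Z : Set X) →
    ¬ FiniteDimensional ℝ W → ¬ FiniteDimensional ℝ Z → ∀ ε > (0:ℝ),
    ∃ w ∈ W, ∃ z ∈ Z, ‖w‖ = 1 ∧ ‖z‖ = 1 ∧ ‖w - z‖ < ε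

/-- A space with few operators: every operator is λI + S with S strictly singular. -/
def FewOperators (X : Type*) [NormedAddCommGroup X] [NormedSpace ℝ X] : Prop :=
  ∀ T : X →L[ℝ] X, ∃ (lam : ℝ) (S : X →L[ℝ] X), StrictlySingular S ∧
    T = lam • ContinuousLinearMap.id ℝ X + S

/-- The rational linear combination of `x ∘ l` with coefficients `a`. -/
def ratComb (x : ℕ → X) (l : List ℕ) (a : ℕ → ℚ) : X :=
  ∑ i ∈ Finset.range l.length, (a i : ℝ) • x (l.getD i 0)

/-- The tree `T(R, m, (x_n))` of sequences of indices on which `R` is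
`(1/m)`-bounded below over rational coefficients. -/
def opTree (R : X →L[ℝ] Y) (m : ℕ) (x : ℕ → X) : Set (List ℕ) :=
  {l | ∀ a : ℕ → ℚ, (1 / (m : ℝ)) * ‖ratComb x l a‖ ≤ ‖R (ratComb x l a)‖}

end Banach

/-- The unit ball of L(X,Y). -/
def SOTBall (X Y : Type*) [NormedAddCommGroup X] [NormedSpace ℝ X]
    [NormedAddCommGroup Y] [NormedSpace ℝ Y] : Type _ := {T : X →L[ℝ] Y // ‖T‖ ≤ 1}

/-- The strong operator topology on the unit ball of L(X,Y). -/
instance SOTBall.topologicalSpace (X Y : Type*) [NormedAddCommGroup X] [NormedSpace ℝ X]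
    [NormedAddCommGroup Y] [NormedSpace ℝ Y] : TopologicalSpace (SOTBall X Y) :=
  TopologicalSpace.induced (fun T => (T.1 : X → Y)) Pi.topologicalSpace
def SOTBall.op {X Y : Type*} [NormedAddCommGroup X] [NormedSpace ℝ X]
    [NormedAddCommGroup Y] [NormedSpace ℝ Y] (T : SOTBall X Y) : X →L[ℝ] Y :=
  Subtype.val T

/-- Normalized sequences with basis constant at most `k`. -/
def basisConstSet (X : Type*) [NormedAddCommGroup X] [NormedSpace ℝ X] (k : ℝ) :
    Set (ℕ → X) :=
  {x | (∀ n, ‖x n‖ = 1) ∧ ∀ m n : ℕ, m ≤ n → ∀ a : ℕ → ℝ,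
    ‖∑ i ∈ Finset.range m, a i • x i‖ ≤ k * ‖∑ i ∈ Finset.range n, a i • x i‖}

open Classical in
/-- The tree `T(R,m,(x_n))` coded as an element of `2^{ℕ^{<ℕ}}`. -/
noncomputable def phiTree {X Y : Type*} [NormedAddCommGroup X] [NormedSpace ℝ X]
    [NormedAddCommGroup Y] [NormedSpace ℝ Y] (m : ℕ) (R : X →L[ℝ] Y) (x : ℕ → X) :
    List ℕ → Bool :=
  fun l => if l ∈ opTree R m x then true else false

/-
On the unit ball, the strong operator topology makes evaluation `(T, v) ↦ T v` jointly continuous,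
since `‖T v - T₀ v₀‖ ≤ ‖v - v₀‖ + ‖T v₀ - T₀ v₀‖`. Hence for each fixed coefficient vector `a` the
inequality `(1/m) ‖∑ aᵢ x_{lᵢ}‖ ≤ ‖R ∑ aᵢ x_{lᵢ}‖` cuts out a closed set of pairs `(R, x)`, and the
set of pairs whose tree contains `l` is an intersection of such sets, so it is closed. A map into
`2^{ℕ^{<ℕ}}` whose coordinates have Borel preimages is Borel, because the product is countable.
-/

section OpTree

variable {X Y : Type*} [NormedAddCommGroup X] [NormedSpace ℝ X]
  [NormedAddCommGroup Y] [NormedSpace ℝ Y]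

open Filter Topology

theorem SOTBall.norm_op_le_one (T : SOTBall X Y) : ‖T.op‖ ≤ 1 := T.2

theorem SOTBall.continuous_op_apply (v : X) : Continuous fun T : SOTBall X Y => T.op v :=
  (continuous_apply v).comp continuous_induced_dom

theorem SOTBall.continuous_eval : Continuous fun q : SOTBall X Y × X => q.1.op q.2 := by
  refine continuous_iff_continuousAt.2 fun ⟨T₀, v₀⟩ => ?_
  have hsmall : Tendsto (fun q : SOTBall X Y × X => q.1.op (q.2 - v₀)) (𝓝 (T₀, v₀)) (𝓝 0) := by
    refine squeeze_zero_norm (a := fun q => ‖q.2 - v₀‖) (fun q => ?_) ?_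
    · exact (q.1.op.le_of_opNorm_le q.1.norm_op_le_one _).trans_eq (one_mul _)
    · simpa using (continuous_snd.sub (continuous_const (y := v₀))).norm.tendsto (T₀, v₀)
  have hfixed := ((continuous_op_apply v₀).comp continuous_fst).tendsto (T₀, v₀)
  simpa [ContinuousAt] using hsmall.add hfixed

theorem continuous_ratComb (l : List ℕ) (a : ℕ → ℚ) :
    Continuous fun x : ℕ → X => ratComb x l a :=
  continuous_finsetSum _ fun _ _ => continuous_const.smul (continuous_apply _)

theorem isClosed_setOf_mem_opTree (m : ℕ) (l : List ℕ) :
    IsClosed {p : SOTBall X Y × (ℕ → X) | l ∈ opTree p.1.op m p.2} := by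
  simp only [opTree, Set.mem_ofPred_eq]
  rw [Set.ofPred_forall]
  have hcomb a := (continuous_ratComb (X := X) l a).comp (continuous_snd (X := SOTBall X Y))
  exact isClosed_iInter fun a => isClosed_le (continuous_const.mul (hcomb a).norm)
    (SOTBall.continuous_eval.comp (continuous_fst.prodMk (hcomb a))).norm

theorem phiTree_eq_true_iff (m : ℕ) (R : X →L[ℝ] Y) (x : ℕ → X) (l : List ℕ) :
    phiTree m R x l = true ↔ l ∈ opTree R m x := by
  simp [phiTree]

end OpTree

section Theorems

open MeasureTheory TopologicalSpace

theorem stmt18_general {X Y : Type*} [NormedAddCommGroup X] [NormedSpace ℝ X]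
    [NormedAddCommGroup Y] [NormedSpace ℝ Y] (m : ℕ) :
    @Measurable {p : SOTBall X Y × (ℕ → X) // StrictlySingular p.1.op ∧ NormalizedBasicSeq p.2}
      (List ℕ → Bool) (borel _) (borel _)
      (fun p => phiTree m p.1.1.op p.1.2) := by
  rw [← (BorelSpace.measurable_eq : _ = borel (List ℕ → Bool))]
  borelize {p : SOTBall X Y × (ℕ → X) // StrictlySingular p.1.op ∧ NormalizedBasicSeq p.2}
  refine measurable_pi_iff.2 fun l => measurable_to_bool ?_
  simp only [Set.preimage, Set.mem_singleton_iff, phiTree_eq_true_iff]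
  exact ((isClosed_setOf_mem_opTree m l).preimage continuous_subtype_val).measurableSet

theorem stmt18 {X Y : Type*} [NormedAddCommGroup X] [NormedSpace ℝ X] [CompleteSpace X]
    [SeparableSpace X] [NormedAddCommGroup Y] [NormedSpace ℝ Y] [CompleteSpace Y]
    [SeparableSpace Y]
    (hBorel : MeasurableSet[borel (SOTBall X Y)]
      {T : SOTBall X Y | StrictlySingular T.op}) (m : ℕ) (hm : 1 ≤ m) :
    @Measurable {p : SOTBall X Y × (ℕ → X) // StrictlySingular p.1.op ∧ NormalizedBasicSeq p.2}
      (List ℕ → Bool) (borel _) (borel _)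
      (fun p => phiTree m p.1.1.op p.1.2) :=
  stmt18_general m

end Theorems
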